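/- Let N ≥ 1 be an integer, λ > 0, and n ∈ ℤ^N, and let α_n(m), m ∈ ℤ^N, be the explicitly defined coefficients. Then: (i) in the defining expression for α_n(m) only finitely many summands are nonzero, so α_n(m) is a well-defined real number; (ii) α_n(n) = 1, and α_n(m) = 0 unless m ⪯ n and |n| − |m| is a nonnegative even integer; (iii) for every m ∈ ℤ^N with m ≠ n one has 2(|n| − |m|) · α_n(m) = Σ_{1≤j≤k≤N} Σ_{ν=0}^∞ g_{jk}(ν; m) · α_n(m + E_{jk}^ν), where the sum over ν contains only finitely many nonzero terms. -/

import Mathlib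

/-- `E_{jk}^ν = (1−ν)e_j + (1+ν)e_k` as an element of `ℤ^N`. -/
def Evec (N : ℕ) (j k : Fin N) (ν : ℕ) : Fin N → ℤ :=
  fun i => (1 - (ν : ℤ)) * (if i = j then 1 else 0) + (1 + (ν : ℤ)) * (if i = k then 1 else 0)

/-- `m̃_j = m_j + λ(N+1−j)` (with `j` 1-indexed; here `j : Fin N` is 0-indexed). -/
noncomputable def mtilde (N : ℕ) (lam : ℝ) (m : Fin N → ℤ) (j : Fin N) : ℝ :=
  (m j : ℝ) + lam * ((N : ℝ) - (j : ℕ))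

/-- `g_{jk}(ν; m) = 2λ(λ−1)ν(1−δ_{jk}) − m̃_j(m̃_j+1)δ_{ν0}δ_{jk}`. -/
noncomputable def gco (N : ℕ) (lam : ℝ) (j k : Fin N) (ν : ℕ) (m : Fin N → ℤ) : ℝ :=
  2 * lam * (lam - 1) * (ν : ℝ) * (if j = k then 0 else 1)
    - mtilde N lam m j * (mtilde N lam m j + 1) * (if ν = 0 then 1 else 0) *
        (if j = k then 1 else 0)

/-- The summand of the `s`-th term in the series defining `α_n(m)`: a choice
`c r = ((j_r, k_r), ν_r)` for `r = 1,…,s`, restricted (via the indicator) to `j_r ≤ k_r`. -/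
noncomputable def alphaTerm (N : ℕ) (lam : ℝ) (n m : Fin N → ℤ) (s : ℕ)
    (c : Fin s → (Fin N × Fin N) × ℕ) : ℝ :=
  (if ∀ r, ((c r).1).1 ≤ ((c r).1).2 then 1 else 0) *
  (if n = m + ∑ r, Evec N ((c r).1).1 ((c r).1).2 (c r).2 then 1 else 0) *
  ∏ r, gco N lam ((c r).1).1 ((c r).1).2 (c r).2
      (n - ∑ l ∈ Finset.univ.filter (fun l => l ≤ r), Evec N ((c l).1).1 ((c l).1).2 (c l).2)

/-- The coefficients `α_n(m)`, defined via finite-support sums (`∑ᶠ`). -/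
noncomputable def alphaCo (N : ℕ) (lam : ℝ) (n m : Fin N → ℤ) : ℝ :=
  (if n = m then 1 else 0) +
    ∑ᶠ s : ℕ, (if 1 ≤ s then
      (1 / (4 ^ s * (Nat.factorial s : ℝ))) *
        ∑ᶠ c : Fin s → (Fin N × Fin N) × ℕ, alphaTerm N lam n m s c
      else 0)

namespace Stmt5
open Finset
variable {N : ℕ}
open Finset

variable {N : ℕ}

def tailS (N : ℕ) (t : Fin N) (v : Fin N → ℤ) : ℤ :=
  ∑ i ∈ Finset.univ.filter (fun i => t ≤ i), v i

lemma tailS_add (t : Fin N) (v w : Fin N → ℤ) :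
    tailS N t (v + w) = tailS N t v + tailS N t w := by
  simp [tailS, Finset.sum_add_distrib]

lemma tailS_sub (t : Fin N) (v w : Fin N → ℤ) :
    tailS N t (v - w) = tailS N t v - tailS N t w := by
  simp [tailS, Finset.sum_sub_distrib]

lemma tailS_sum {ι : Type*} (s : Finset ι) (f : ι → Fin N → ℤ) (t : Fin N) :
    tailS N t (∑ i ∈ s, f i) = ∑ i ∈ s, tailS N t (f i) := by
  simp only [tailS, Finset.sum_apply]
  rw [Finset.sum_comm]

lemma evec_tailS (t j k : Fin N) (ν : ℕ) :
    tailS N t (Evec N j k ν)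
      = (if t ≤ j then 1 - (ν : ℤ) else 0) + (if t ≤ k then 1 + (ν : ℤ) else 0) := by
  simp [tailS, Evec, Finset.sum_add_distrib, mul_ite, mul_one, mul_zero,
    Finset.sum_ite_eq, Finset.mem_filter]

lemma evec_tailS_nonneg {j k : Fin N} (h : j ≤ k) (ν : ℕ) (t : Fin N) :
    0 ≤ tailS N t (Evec N j k ν) := by
  rw [evec_tailS]
  simp only [Fin.le_def] at *
  split_ifs <;> omega

lemma evec_tailS_at {j k : Fin N} (h : j < k) (ν : ℕ) :
    tailS N k (Evec N j k ν) = 1 + (ν : ℤ) := by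
  rw [evec_tailS, if_neg (not_le.mpr h), if_pos le_rfl, zero_add]

lemma evec_total (j k : Fin N) (ν : ℕ) : ∑ i, Evec N j k ν i = 2 := by
  simp [Evec, Finset.sum_add_distrib, mul_ite, mul_one, mul_zero, Finset.sum_ite_eq]

lemma tailS_le_natAbs (t : Fin N) (v : Fin N → ℤ) : tailS N t v ≤ ∑ i, |v i| :=
  le_trans (Finset.sum_le_sum fun i _ => le_abs_self _)
    (Finset.sum_le_sum_of_subset_of_nonneg (Finset.filter_subset _ _)
      (fun i _ _ => abs_nonneg _))

def Bn (n m : Fin N → ℤ) : ℕ := (∑ i, |n i - m i|).toNat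

lemma tailS_le_Bn (n m : Fin N → ℤ) (t : Fin N) : tailS N t (n - m) ≤ (Bn n m : ℤ) := by
  refine le_trans (tailS_le_natAbs t _) ?_
  have : ∑ i, |(n - m) i| = ∑ i, |n i - m i| := by simp
  rw [this, Bn]
  exact Int.self_le_toNat _

lemma gco_diag_ne {lam : ℝ} {j k : Fin N} {ν : ℕ} {m' : Fin N → ℤ} (hjk : j = k)
    (hν : ν ≠ 0) : gco N lam j k ν m' = 0 := by
  simp [gco, hjk, hν]

lemma alphaTerm_ne {lam : ℝ} {n m : Fin N → ℤ} {s : ℕ} {c : Fin s → (Fin N × Fin N) × ℕ}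
    (h : alphaTerm N lam n m s c ≠ 0) :
    (∀ r, ((c r).1).1 ≤ ((c r).1).2) ∧
    n = m + ∑ r, Evec N ((c r).1).1 ((c r).1).2 (c r).2 ∧
    (∀ r, ((c r).1).1 = ((c r).1).2 → (c r).2 = 0) := by
  rw [alphaTerm] at h
  have h1 : ∀ r, ((c r).1).1 ≤ ((c r).1).2 := by
    by_contra hc
    rw [if_neg hc] at h
    simp at h
  have h2 : n = m + ∑ r, Evec N ((c r).1).1 ((c r).1).2 (c r).2 := by
    by_contra hc
    rw [if_neg hc] at h
    simp at h
  refine ⟨h1, h2, fun r hr => ?_⟩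
  by_contra hν
  exact h (by rw [Finset.prod_eq_zero (Finset.mem_univ r) (gco_diag_ne hr hν), mul_zero])

lemma alphaTerm_ne' {lam : ℝ} {n m : Fin N → ℤ} {s : ℕ} {c : Fin s → (Fin N × Fin N) × ℕ}
    (h : alphaTerm N lam n m s c ≠ 0) :
    (∀ t, tailS N t m ≤ tailS N t n) ∧
    ((∑ j, n j) - (∑ j, m j) = 2 * s) ∧
    (∀ r, (c r).2 = 0 ∨ ((c r).2 : ℤ) + 1 ≤ tailS N ((c r).1.2) (n - m)) := by
  obtain ⟨h1, h2, h0⟩ := alphaTerm_ne h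
  have hnm : n - m = ∑ r, Evec N ((c r).1).1 ((c r).1).2 (c r).2 := by
    rw [h2]; ring
  have htail : ∀ t, tailS N t (n - m) = ∑ r, tailS N t (Evec N ((c r).1).1 ((c r).1).2 (c r).2) := by
    intro t; rw [hnm, tailS_sum]
  refine ⟨?_, ?_, ?_⟩
  · intro t
    have h3 : 0 ≤ tailS N t (n - m) := by
      rw [htail]
      exact Finset.sum_nonneg fun r _ => evec_tailS_nonneg (h1 r) _ _
    rw [tailS_sub] at h3
    omega
  · have h5 : ∑ j, (n - m) j = ∑ r : Fin s, (2 : ℤ) := by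
      rw [hnm]
      simp only [Finset.sum_apply]
      rw [Finset.sum_comm]
      exact Finset.sum_congr rfl fun r _ => evec_total _ _ _
    have h6 : ∑ j, (n - m) j = (∑ j, n j) - ∑ j, m j := by
      simp [Finset.sum_sub_distrib]
    rw [h6] at h5
    rw [h5]
    simp [two_mul, Finset.sum_const, mul_comm]
  · intro r
    rcases eq_or_lt_of_le (h1 r) with heq | hlt
    · exact Or.inl (h0 r heq)
    · right
      have h4 : tailS N ((c r).1.2) (Evec N ((c r).1).1 ((c r).1).2 (c r).2)
          ≤ tailS N ((c r).1.2) (n - m) := by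
        rw [htail]
        exact Finset.single_le_sum (fun r' _ => evec_tailS_nonneg (h1 r') _ _) (Finset.mem_univ r)
      rw [evec_tailS_at hlt] at h4
      omega
lemma support_alphaTerm (lam : ℝ) (n m : Fin N → ℤ) (s : ℕ) {C : ℕ}
    (hC : ∀ t, tailS N t (n - m) ≤ (C : ℤ)) :
    Function.support (alphaTerm N lam n m s) ⊆
      ↑(Fintype.piFinset fun _ : Fin s =>
        (Finset.univ : Finset (Fin N × Fin N)) ×ˢ Finset.range (C + 1)) := by
  intro c hc
  simp only [Finset.coe_sort_coe, Finset.mem_coe, Fintype.mem_piFinset, Finset.mem_product,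
    Finset.mem_univ, true_and, Finset.mem_range]
  intro r
  rcases (alphaTerm_ne' hc).2.2 r with h | h
  · omega
  · have := hC ((c r).1.2)
    omega

lemma support_alphaTerm_finite (lam : ℝ) (n m : Fin N → ℤ) (s : ℕ) :
    (Function.support (alphaTerm N lam n m s)).Finite :=
  Set.Finite.subset (Finset.finite_toSet _) (support_alphaTerm lam n m s (tailS_le_Bn n m))

noncomputable def Ssum (N : ℕ) (lam : ℝ) (n m : Fin N → ℤ) (s : ℕ) : ℝ :=
  ∑ᶠ c : Fin s → (Fin N × Fin N) × ℕ, alphaTerm N lam n m s c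

lemma Ssum_eq_sum (lam : ℝ) (n m : Fin N → ℤ) (s : ℕ) {C : ℕ}
    (hC : ∀ t, tailS N t (n - m) ≤ (C : ℤ)) :
    Ssum N lam n m s = ∑ c ∈ Fintype.piFinset (fun _ : Fin s =>
        (Finset.univ : Finset (Fin N × Fin N)) ×ˢ Finset.range (C + 1)),
      alphaTerm N lam n m s c :=
  finsum_eq_sum_of_support_subset _ (support_alphaTerm lam n m s hC)

lemma Ssum_zero (lam : ℝ) (n m : Fin N → ℤ) :
    Ssum N lam n m 0 = if n = m then 1 else 0 := by
  rw [Ssum, finsum_unique]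
  simp [alphaTerm]

lemma Ssum_ne_zero {lam : ℝ} {n m : Fin N → ℤ} {s : ℕ} (h : Ssum N lam n m s ≠ 0) :
    (∀ t, tailS N t m ≤ tailS N t n) ∧ ((∑ j, n j) - (∑ j, m j) = 2 * s) := by
  have hex : ∃ c, alphaTerm N lam n m s c ≠ 0 := by
    by_contra hc
    push_neg at hc
    exact h (finsum_eq_zero_of_forall_eq_zero hc)
  obtain ⟨c, hc⟩ := hex
  exact ⟨(alphaTerm_ne' hc).1, (alphaTerm_ne' hc).2.1⟩

/-- weight -/
noncomputable def wgt (s : ℕ) : ℝ := 1 / (4 ^ s * (Nat.factorial s : ℝ))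

lemma wgt_ne_zero (s : ℕ) : wgt s ≠ 0 := by
  have h1 : (0:ℝ) < 4 ^ s := by positivity
  have h2 : (0:ℝ) < (Nat.factorial s : ℝ) := by
    exact_mod_cast Nat.factorial_pos s
  rw [wgt]
  positivity

lemma wgt_succ (s : ℕ) : 4 * ((s:ℝ) + 1) * wgt (s+1) = wgt s := by
  have h2 : ((Nat.factorial (s+1) : ℕ) : ℝ) = ((s:ℝ)+1) * (Nat.factorial s : ℝ) := by
    rw [Nat.factorial_succ]; push_cast; ring
  have h1 : (0:ℝ) < 4 ^ s := by positivity
  have h3 : (0:ℝ) < (Nat.factorial s : ℝ) := by exact_mod_cast Nat.factorial_pos s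
  have h4 : ((s:ℝ) + 1) ≠ 0 := by positivity
  rw [wgt, wgt, h2, pow_succ]
  field_simp

lemma support_sfun (lam : ℝ) (n m : Fin N → ℤ) {K : ℕ}
    (hK : ((∑ j, n j) - (∑ j, m j)).toNat < K) :
    Function.support (fun s : ℕ => if 1 ≤ s then wgt s * Ssum N lam n m s else 0)
      ⊆ ↑(Finset.range K) := by
  intro s hs
  simp only [Function.mem_support] at hs
  simp only [Finset.coe_sort_coe, Finset.mem_coe, Finset.mem_range]
  by_cases h1 : 1 ≤ s
  · rw [if_pos h1] at hs
    have hS : Ssum N lam n m s ≠ 0 := fun h => hs (by rw [h, mul_zero])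
    have hD := (Ssum_ne_zero hS).2
    omega
  · rw [if_neg h1] at hs
    exact absurd rfl hs

lemma alphaCo_eq_sum (lam : ℝ) (n m : Fin N → ℤ) {K : ℕ}
    (hK : ((∑ j, n j) - (∑ j, m j)).toNat < K) :
    alphaCo N lam n m = (if n = m then 1 else 0) +
      ∑ s ∈ Finset.range K, (if 1 ≤ s then wgt s * Ssum N lam n m s else 0) := by
  rw [alphaCo]
  congr 1
  exact finsum_eq_sum_of_support_subset _ (support_sfun lam n m hK)

lemma alphaCo_self (lam : ℝ) (n : Fin N → ℤ) : alphaCo N lam n n = 1 := by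
  rw [alphaCo, if_pos rfl]
  have h0 : ∀ s : ℕ, (if 1 ≤ s then
      (1 / (4 ^ s * (Nat.factorial s : ℝ))) *
        ∑ᶠ c : Fin s → (Fin N × Fin N) × ℕ, alphaTerm N lam n n s c
      else 0) = 0 := by
    intro s
    by_cases h1 : 1 ≤ s
    · rw [if_pos h1]
      rcases eq_or_ne (Ssum N lam n n s) 0 with h | h
      · rw [show (∑ᶠ c : Fin s → (Fin N × Fin N) × ℕ, alphaTerm N lam n n s c) = Ssum N lam n n s from rfl, h, mul_zero]
      · exfalso
        have := (Ssum_ne_zero h).2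
        omega
    · rw [if_neg h1]
  rw [finsum_eq_zero_of_forall_eq_zero h0, add_zero]

lemma alphaCo_vanish (lam : ℝ) (n m : Fin N → ℤ)
    (h : ¬ ((∀ j : Fin N,
            ∑ k ∈ Finset.univ.filter (fun k => j ≤ k), m k ≤
              ∑ k ∈ Finset.univ.filter (fun k => j ≤ k), n k) ∧
          0 ≤ (∑ j, n j) - (∑ j, m j) ∧ Even ((∑ j, n j) - (∑ j, m j)))) :
    alphaCo N lam n m = 0 := by
  have hmn : n ≠ m := by
    rintro rfl
    exact h ⟨fun j => le_rfl, by omega, by simp⟩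
  rw [alphaCo, if_neg hmn]
  have h0 : ∀ s : ℕ, (if 1 ≤ s then
      (1 / (4 ^ s * (Nat.factorial s : ℝ))) *
        ∑ᶠ c : Fin s → (Fin N × Fin N) × ℕ, alphaTerm N lam n m s c
      else 0) = 0 := by
    intro s
    by_cases h1 : 1 ≤ s
    · rw [if_pos h1]
      rcases eq_or_ne (Ssum N lam n m s) 0 with hS | hS
      · rw [show (∑ᶠ c : Fin s → (Fin N × Fin N) × ℕ, alphaTerm N lam n m s c) = Ssum N lam n m s from rfl, hS, mul_zero]
      · exfalso
        obtain ⟨ht, hD⟩ := Ssum_ne_zero hS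
        exact h ⟨fun j => ht j, by omega, ⟨s, by omega⟩⟩
    · rw [if_neg h1]
  rw [finsum_eq_zero_of_forall_eq_zero h0, zero_add]
lemma sum_filter_castSucc {M : Type*} [AddCommMonoid M] {s : ℕ} (r : Fin s)
    (g : Fin (s+1) → M) :
    ∑ l ∈ Finset.univ.filter (fun l => l ≤ Fin.castSucc r), g l
      = ∑ l ∈ Finset.univ.filter (fun l => l ≤ r), g (Fin.castSucc l) := by
  rw [Finset.sum_filter, Finset.sum_filter, Fin.sum_univ_castSucc
    (f := fun l => if l ≤ Fin.castSucc r then g l else 0)]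
  simp [Fin.castSucc_le_castSucc_iff, (Fin.castSucc_lt_last r).not_ge]

lemma filter_le_last {s : ℕ} :
    Finset.univ.filter (fun l : Fin (s+1) => l ≤ Fin.last s) = Finset.univ := by
  simp [Fin.le_last]

lemma ite_and_one (P Q : Prop) [Decidable P] [Decidable Q] :
    (if P ∧ Q then (1:ℝ) else 0) = (if P then 1 else 0) * (if Q then 1 else 0) := by
  by_cases hP : P <;> by_cases hQ : Q <;> simp [hP, hQ]

lemma alphaTerm_snoc (lam : ℝ) (n m : Fin N → ℤ) (s : ℕ)
    (c : Fin s → (Fin N × Fin N) × ℕ) (x : (Fin N × Fin N) × ℕ) :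
    alphaTerm N lam n m (s+1) (Fin.snoc c x) =
      (if (x.1).1 ≤ (x.1).2 then 1 else 0) * gco N lam (x.1).1 (x.1).2 x.2 m *
        alphaTerm N lam n (m + Evec N (x.1).1 (x.1).2 x.2) s c := by
  set E := Evec N (x.1).1 (x.1).2 x.2 with hE
  set A := ∑ r : Fin s, Evec N ((c r).1).1 ((c r).1).2 (c r).2 with hA
  have hsum : (∑ r : Fin (s+1), Evec N (((Fin.snoc c x : Fin (s+1) → _) r).1).1
      (((Fin.snoc c x : Fin (s+1) → _) r).1).2 ((Fin.snoc c x : Fin (s+1) → _) r).2) = A + E := by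
    rw [Fin.sum_univ_castSucc]
    simp [hA, hE]
  have hind : (∀ r : Fin (s+1), (((Fin.snoc c x : Fin (s+1) → _) r).1).1
        ≤ (((Fin.snoc c x : Fin (s+1) → _) r).1).2)
      ↔ ((∀ r : Fin s, ((c r).1).1 ≤ ((c r).1).2) ∧ (x.1).1 ≤ (x.1).2) := by
    constructor
    · intro h
      refine ⟨fun r => by simpa using h (Fin.castSucc r), by simpa using h (Fin.last s)⟩
    · intro h r
      induction r using Fin.lastCases with
      | last => simpa using h.2
      | cast r => simpa using h.1 r
  have hprod : ∀ r : Fin s,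
      (∑ l ∈ Finset.univ.filter (fun l => l ≤ Fin.castSucc r),
        Evec N (((Fin.snoc c x : Fin (s+1) → _) l).1).1
          (((Fin.snoc c x : Fin (s+1) → _) l).1).2 ((Fin.snoc c x : Fin (s+1) → _) l).2)
      = ∑ l ∈ Finset.univ.filter (fun l => l ≤ r),
          Evec N ((c l).1).1 ((c l).1).2 (c l).2 := by
    intro r
    rw [sum_filter_castSucc r]
    simp
  by_cases hn : n = m + (A + E)
  · have hn' : n = (m + E) + A := by rw [hn]; ring
    have hm : n - (A + E) = m := by rw [hn]; ring
    rw [alphaTerm, alphaTerm, hsum, if_pos hn, if_pos hn',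
      Fin.prod_univ_castSucc (f := fun r : Fin (s+1) =>
      gco N lam ((Fin.snoc c x : Fin (s+1) → _) r).1.1 ((Fin.snoc c x : Fin (s+1) → _) r).1.2
        ((Fin.snoc c x : Fin (s+1) → _) r).2
        (n - ∑ l ∈ Finset.univ.filter (fun l => l ≤ r),
          Evec N ((Fin.snoc c x : Fin (s+1) → _) l).1.1 ((Fin.snoc c x : Fin (s+1) → _) l).1.2
            ((Fin.snoc c x : Fin (s+1) → _) l).2))]
    simp only [Fin.snoc_castSucc, Fin.snoc_last, filter_le_last, hprod, hsum, hm, hind,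
      ite_and_one]
    ring
  · rw [alphaTerm, alphaTerm, hsum, if_neg hn,
      if_neg (fun hh : n = (m + E) + A => hn (by rw [hh]; ring))]
    ring
lemma sum_piFinset_succ {M : Type*} [AddCommMonoid M] {X : Type*} [DecidableEq X]
    (T : Finset X) (s : ℕ) (f : (Fin (s+1) → X) → M) :
    ∑ c ∈ Fintype.piFinset (fun _ : Fin (s+1) => T), f c
      = ∑ x ∈ T, ∑ c ∈ Fintype.piFinset (fun _ : Fin s => T), f (Fin.snoc c x) := by
  rw [← Finset.sum_product (s := T) (t := Fintype.piFinset fun _ : Fin s => T)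
    (f := fun p : X × (Fin s → X) => f (Fin.snoc p.2 p.1))]
  refine Finset.sum_nbij' (i := fun c => (c (Fin.last s), Fin.init c))
    (j := fun p => Fin.snoc p.2 p.1) ?_ ?_ ?_ ?_ ?_
  · intro c hc
    simp only [Fintype.mem_piFinset] at hc
    simp only [Finset.mem_product, Fintype.mem_piFinset]
    exact ⟨hc _, fun i => hc _⟩
  · intro p hp
    simp only [Finset.mem_product, Fintype.mem_piFinset] at hp
    simp only [Fintype.mem_piFinset]
    intro i
    induction i using Fin.lastCases with
    | last => simpa using hp.1
    | cast i => simpa using hp.2 i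
  · intro c _
    exact Fin.snoc_init_self c
  · intro p _
    simp
  · intro c _
    rw [Fin.snoc_init_self]

lemma tail_bound_shift {n m : Fin N → ℤ} {j k : Fin N} (hjk : j ≤ k) (ν : ℕ) (t : Fin N) :
    tailS N t (n - (m + Evec N j k ν)) ≤ (Bn n m : ℤ) := by
  have h1 : n - (m + Evec N j k ν) = (n - m) - Evec N j k ν := by ring
  rw [h1, tailS_sub]
  have h2 := evec_tailS_nonneg hjk ν t
  have h3 := tailS_le_Bn n m t
  omega

lemma Ssum_succ (lam : ℝ) (n m : Fin N → ℤ) (s : ℕ) :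
    Ssum N lam n m (s+1) =
      ∑ x ∈ (Finset.univ : Finset (Fin N × Fin N)) ×ˢ Finset.range (Bn n m + 1),
        (if (x.1).1 ≤ (x.1).2 then 1 else 0) * gco N lam (x.1).1 (x.1).2 x.2 m *
          Ssum N lam n (m + Evec N (x.1).1 (x.1).2 x.2) s := by
  rw [Ssum_eq_sum lam n m (s+1) (tailS_le_Bn n m), sum_piFinset_succ]
  refine Finset.sum_congr rfl fun x hx => ?_
  rw [Finset.sum_congr rfl fun c _ => alphaTerm_snoc lam n m s c x, ← Finset.mul_sum]
  by_cases hx1 : (x.1).1 ≤ (x.1).2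
  · congr 1
    exact (Ssum_eq_sum lam n _ s (tail_bound_shift hx1 x.2)).symm
  · simp [hx1]
lemma support_nu (lam : ℝ) (n m : Fin N → ℤ) {j k : Fin N} (hjk : j ≤ k) :
    Function.support (fun ν : ℕ =>
      gco N lam j k ν m * alphaCo N lam n (m + Evec N j k ν))
      ⊆ ↑(Finset.range (Bn n m + 1)) := by
  intro ν hν
  simp only [Function.mem_support] at hν
  simp only [Finset.coe_sort_coe, Finset.mem_coe, Finset.mem_range]
  have hg : gco N lam j k ν m ≠ 0 := fun h => hν (by rw [h, zero_mul])
  have ha : alphaCo N lam n (m + Evec N j k ν) ≠ 0 := fun h => hν (by rw [h, mul_zero])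
  rcases eq_or_lt_of_le hjk with heq | hlt
  · have h0 : ν = 0 := by
      by_contra h
      exact hg (gco_diag_ne heq h)
    omega
  · have hc : (∀ j' : Fin N,
        ∑ k' ∈ Finset.univ.filter (fun k' => j' ≤ k'), (m + Evec N j k ν) k' ≤
          ∑ k' ∈ Finset.univ.filter (fun k' => j' ≤ k'), n k') ∧
        0 ≤ (∑ i, n i) - (∑ i, (m + Evec N j k ν) i) ∧
        Even ((∑ i, n i) - (∑ i, (m + Evec N j k ν) i)) := by
      by_contra hcc
      exact ha (alphaCo_vanish lam n _ hcc)
    have h5 : tailS N k (m + Evec N j k ν) ≤ tailS N k n := hc.1 k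
    rw [tailS_add, evec_tailS_at hlt] at h5
    have h6 := tailS_le_Bn n m k
    rw [tailS_sub] at h6
    omega
lemma main_rec (lam : ℝ) (n m : Fin N → ℤ) (hmn : m ≠ n) :
    (2 * (((∑ j, n j) - (∑ j, m j) : ℤ) : ℝ)) * alphaCo N lam n m =
      ∑ j : Fin N, ∑ k : Fin N, (if j ≤ k then
        ∑ᶠ ν : ℕ, gco N lam j k ν m * alphaCo N lam n (m + Evec N j k ν)
        else 0) := by
  set D : ℤ := (∑ j, n j) - (∑ j, m j) with hD
  set K : ℕ := D.toNat with hK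
  -- LHS expansion
  have hL1 : alphaCo N lam n m = ∑ s ∈ Finset.range (K+2),
      (if 1 ≤ s then wgt s * Ssum N lam n m s else 0) := by
    rw [alphaCo_eq_sum lam n m (K := K+2) (by omega), if_neg (fun h => hmn h.symm), zero_add]
  have hterm : ∀ s : ℕ, 2 * (D:ℝ) * (if 1 ≤ s then wgt s * Ssum N lam n m s else 0)
      = (if 1 ≤ s then (4 * ((s:ℕ):ℝ)) * (wgt s * Ssum N lam n m s) else 0) := by
    intro s
    by_cases h1 : 1 ≤ s
    · rw [if_pos h1, if_pos h1]
      rcases eq_or_ne (Ssum N lam n m s) 0 with h | h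
      · rw [h]; ring
      · have hDs : D = 2 * (s:ℤ) := by
          have := (Ssum_ne_zero h).2
          rw [← hD] at this
          exact this
        have hc : (D:ℝ) = 2 * (s:ℕ) := by rw [hDs]; push_cast; ring
        rw [hc]; ring
    · rw [if_neg h1, if_neg h1, mul_zero]
  have hLHS : 2 * (D:ℝ) * alphaCo N lam n m
      = ∑ s ∈ Finset.range (K+1), wgt s * Ssum N lam n m (s+1) := by
    rw [hL1, Finset.mul_sum, Finset.sum_congr rfl fun s _ => hterm s,
      Finset.sum_range_succ']
    have h0 : (if 1 ≤ 0 then (4 * ((0:ℕ):ℝ)) * (wgt 0 * Ssum N lam n m 0) else 0) = 0 := by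
      norm_num
    rw [h0, add_zero]
    refine Finset.sum_congr rfl fun s _ => ?_
    rw [if_pos (Nat.le_add_left 1 s), show (((s+1:ℕ)):ℝ) = (s:ℝ)+1 by push_cast; ring,
      ← mul_assoc, wgt_succ]
  -- RHS: product Finset form
  have hRHS1 : ∑ x ∈ (Finset.univ : Finset (Fin N × Fin N)) ×ˢ Finset.range (Bn n m + 1),
        (if (x.1).1 ≤ (x.1).2 then (1:ℝ) else 0) * gco N lam (x.1).1 (x.1).2 x.2 m *
          alphaCo N lam n (m + Evec N (x.1).1 (x.1).2 x.2)
      = ∑ j : Fin N, ∑ k : Fin N, (if j ≤ k then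
          ∑ᶠ ν : ℕ, gco N lam j k ν m * alphaCo N lam n (m + Evec N j k ν) else 0) := by
    rw [Finset.sum_product, Fintype.sum_prod_type]
    refine Finset.sum_congr rfl fun j _ => Finset.sum_congr rfl fun k _ => ?_
    by_cases hjk : j ≤ k
    · rw [if_pos hjk, finsum_eq_sum_of_support_subset _ (support_nu lam n m hjk)]
      refine Finset.sum_congr rfl fun ν _ => ?_
      rw [if_pos hjk, one_mul]
    · rw [if_neg hjk]
      refine Finset.sum_eq_zero fun ν _ => ?_
      rw [if_neg hjk, zero_mul, zero_mul]
  -- expansion of alphaCo at shifted points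
  have hDE : ∀ (j k : Fin N) (ν : ℕ),
      (∑ i, n i) - (∑ i, (m + Evec N j k ν) i) = D - 2 := by
    intro j k ν
    have h1 : ∑ i, (m + Evec N j k ν) i = (∑ i, m i) + 2 := by
      simp [Finset.sum_add_distrib, evec_total]
    rw [h1, hD]; ring
  have hAx : ∀ (j k : Fin N) (ν : ℕ),
      alphaCo N lam n (m + Evec N j k ν) = Ssum N lam n (m + Evec N j k ν) 0 +
        ∑ s ∈ Finset.range (K+2),
          (if 1 ≤ s then wgt s * Ssum N lam n (m + Evec N j k ν) s else 0) := by
    intro j k ν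
    rw [alphaCo_eq_sum lam n _ (K := K+2) (by rw [hDE]; omega), Ssum_zero]
  -- the main summation step
  have hstep : ∑ x ∈ (Finset.univ : Finset (Fin N × Fin N)) ×ˢ Finset.range (Bn n m + 1),
        (if (x.1).1 ≤ (x.1).2 then (1:ℝ) else 0) * gco N lam (x.1).1 (x.1).2 x.2 m *
          alphaCo N lam n (m + Evec N (x.1).1 (x.1).2 x.2)
      = Ssum N lam n m 1 + ∑ s ∈ Finset.range (K+2),
          (if 1 ≤ s then wgt s * Ssum N lam n m (s+1) else 0) := by
    have e1 : ∀ x ∈ (Finset.univ : Finset (Fin N × Fin N)) ×ˢ Finset.range (Bn n m + 1),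
        (if (x.1).1 ≤ (x.1).2 then (1:ℝ) else 0) * gco N lam (x.1).1 (x.1).2 x.2 m *
          alphaCo N lam n (m + Evec N (x.1).1 (x.1).2 x.2)
        = ((if (x.1).1 ≤ (x.1).2 then (1:ℝ) else 0) * gco N lam (x.1).1 (x.1).2 x.2 m *
            Ssum N lam n (m + Evec N (x.1).1 (x.1).2 x.2) 0)
          + ∑ s ∈ Finset.range (K+2), (if 1 ≤ s then
              wgt s * ((if (x.1).1 ≤ (x.1).2 then (1:ℝ) else 0) *
                gco N lam (x.1).1 (x.1).2 x.2 m *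
                Ssum N lam n (m + Evec N (x.1).1 (x.1).2 x.2) s) else 0) := by
      intro x _
      rw [hAx (x.1).1 (x.1).2 x.2, mul_add, Finset.mul_sum]
      congr 1
      refine Finset.sum_congr rfl fun s _ => ?_
      by_cases h1 : 1 ≤ s
      · rw [if_pos h1, if_pos h1]; ring
      · rw [if_neg h1, if_neg h1, mul_zero]
    rw [Finset.sum_congr rfl e1, Finset.sum_add_distrib]
    congr 1
    · exact (Ssum_succ lam n m 0).symm
    · rw [Finset.sum_comm]
      refine Finset.sum_congr rfl fun s _ => ?_
      by_cases h1 : 1 ≤ s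
      · simp only [if_pos h1]
        rw [← Finset.mul_sum, Ssum_succ lam n m s]
      · simp only [if_neg h1]
        simp
  -- tail term vanishes
  have hKiss : Ssum N lam n m (K+2) = 0 := by
    by_contra h
    have h2 := (Ssum_ne_zero h).2
    rw [← hD] at h2
    omega
  -- final arithmetic
  have harith : ∑ s ∈ Finset.range (K+1), wgt s * Ssum N lam n m (s+1)
      = Ssum N lam n m 1 + ∑ s ∈ Finset.range (K+2),
          (if 1 ≤ s then wgt s * Ssum N lam n m (s+1) else 0) := by
    have hw0 : wgt 0 = 1 := by simp [wgt]
    rw [Finset.sum_range_succ' (fun s => wgt s * Ssum N lam n m (s+1)) K,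
      Finset.sum_range_succ'
        (fun s => if 1 ≤ s then wgt s * Ssum N lam n m (s+1) else 0) (K+1)]
    have hite : ∀ s : ℕ,
        (if 1 ≤ s+1 then wgt (s+1) * Ssum N lam n m (s+1+1) else 0)
          = wgt (s+1) * Ssum N lam n m (s+1+1) := fun s => by
      rw [if_pos (Nat.le_add_left 1 s)]
    rw [Finset.sum_congr rfl fun s _ => hite s, Finset.sum_range_succ, hKiss, hw0]
    norm_num
    ring
  rw [hLHS, harith, ← hstep, hRHS1]
end Stmt5

theorem stmt_5 (N : ℕ) (hN : 1 ≤ N) (lam : ℝ) (hlam : 0 < lam) (n : Fin N → ℤ) :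
    -- (i) only finitely many summands are nonzero
    (∀ m : Fin N → ℤ, ∀ s : ℕ, 1 ≤ s →
        (Function.support (alphaTerm N lam n m s)).Finite) ∧
    (∀ m : Fin N → ℤ,
        (Function.support (fun s : ℕ => if 1 ≤ s then
          (1 / (4 ^ s * (Nat.factorial s : ℝ))) *
            ∑ᶠ c : Fin s → (Fin N × Fin N) × ℕ, alphaTerm N lam n m s c
          else 0)).Finite) ∧
    -- (ii) normalization and vanishing
    alphaCo N lam n n = 1 ∧
    (∀ m : Fin N → ℤ,
      ¬ ((∀ j : Fin N,
            ∑ k ∈ Finset.univ.filter (fun k => j ≤ k), m k ≤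
              ∑ k ∈ Finset.univ.filter (fun k => j ≤ k), n k) ∧
          0 ≤ (∑ j, n j) - (∑ j, m j) ∧ Even ((∑ j, n j) - (∑ j, m j))) →
        alphaCo N lam n m = 0) ∧
    -- (iii) the recursion relations
    (∀ m : Fin N → ℤ, m ≠ n →
      (∀ j k : Fin N, j ≤ k →
        (Function.support (fun ν : ℕ =>
          gco N lam j k ν m * alphaCo N lam n (m + Evec N j k ν))).Finite) ∧
      (2 * (((∑ j, n j) - (∑ j, m j) : ℤ) : ℝ)) * alphaCo N lam n m =
        ∑ j : Fin N, ∑ k : Fin N, (if j ≤ k then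
          ∑ᶠ ν : ℕ, gco N lam j k ν m * alphaCo N lam n (m + Evec N j k ν)
          else 0)) := by
  refine ⟨fun m s _ => Stmt5.support_alphaTerm_finite lam n m s,
    fun m => Set.Finite.subset (Finset.finite_toSet _)
      (Stmt5.support_sfun lam n m (Nat.lt_succ_self _)),
    Stmt5.alphaCo_self lam n,
    fun m => Stmt5.alphaCo_vanish lam n m,
    fun m hmn => ⟨fun j k hjk => Set.Finite.subset (Finset.finite_toSet _)
      (Stmt5.support_nu lam n m hjk),
      Stmt5.main_rec lam n m hmn⟩⟩
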